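/- If f : X → Y satisfies f(nx+y) + f(nx−y) = n²f(x+y) + n²f(x−y) + 2f(nx) − 2n²f(x) − 2(n²−1)f(y) for all x, y ∈ X, then f(x) = (1/12)·(f(2x) − 4f(x)) − (1/12)·(f(2x) − 16f(x)) for all x ∈ X, where the first summand is a quartic function (satisfying h(2x+y)+h(2x−y)=4h(x+y)+4h(x−y)+24h(x)−6h(y)) and the second bracketed function is quadratic (satisfying g(x+y)+g(x−y)=2g(x)+2g(y)). -/

import Mathlib

/-!
Write `D f u v = f (u + v) + f (u - v) - 2 f u - 2 f v`. The functional equation says exactly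
that `D f (n u) v = n² D f u v`. Taking `u = 0` and using `n² ≠ 1` gives `D f 0 = 0`, so `f 0 = 0`
and `f` is even, hence `D f` is symmetric. Combining the four-point identity for `D f` at
`(n x, x, y)`, `(x, n x, y)` and its doubling specialisation at `x` and `n x` yields
`(1 - n²) (D f (2x) y - 4 D f x y) = 0`, so `D f` is homogeneous of degree 2 in each variable
under doubling. Hence `D f (2x) (2y) = 16 D f x y`, which makes `f (2·) - 16 f` quadratic, and
`D f (4x) (2y) = 64 D f x y` then makes `f (2·) - 4 f` quartic.
-/

section

variable {X Y : Type*} [AddCommGroup X] [AddCommGroup Y]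

def quadDefect (f : X → Y) (u v : X) : Y :=
  f (u + v) + f (u - v) - (2 : ℤ) • f u - (2 : ℤ) • f v

theorem quadDefect_add_sub_swap (f : X → Y) (a b c : X) :
    quadDefect f (a + b) c + quadDefect f (a - b) c + (2 : ℤ) • quadDefect f a b =
      quadDefect f (a + c) b + quadDefect f (a - c) b + (2 : ℤ) • quadDefect f a c := by
  simp only [quadDefect]
  rw [add_right_comm a c b, sub_add_eq_add_sub a c b, sub_right_comm a c b,
    add_sub_right_comm a c b]
  module

theorem quadDefect_comm {f : X → Y} (hf : Function.Even f) (u v : X) :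
    quadDefect f u v = quadDefect f v u := by
  simp only [quadDefect]
  rw [add_comm v u, ← neg_sub u v, hf]
  module

theorem quadDefect_neg_left {f : X → Y} (hf : Function.Even f) (u v : X) :
    quadDefect f (-u) v = quadDefect f u v := by
  simp only [quadDefect]
  rw [neg_add_eq_sub, ← neg_sub u v, ← neg_add', hf, hf, hf]
  module

theorem quadDefect_add_self_left {f : X → Y} (h0 : ∀ v, quadDefect f 0 v = 0) (x y : X) :
    quadDefect f (x + x) y = quadDefect f (x + y) x + quadDefect f (x - y) x
      + (2 : ℤ) • quadDefect f x y - (2 : ℤ) • quadDefect f x x := by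
  have h := quadDefect_add_sub_swap f x x y
  rw [sub_self, h0] at h
  linear_combination (norm := module) h

def IsQuadDefectHomogeneous (n : ℤ) (f : X → Y) : Prop :=
  ∀ u v, quadDefect f (n • u) v = n ^ 2 • quadDefect f u v

theorem isQuadDefectHomogeneous_iff {n : ℤ} {f : X → Y} :
    IsQuadDefectHomogeneous n f ↔ ∀ x y : X, f (n • x + y) + f (n • x - y) =
      (n ^ 2) • f (x + y) + (n ^ 2) • f (x - y) + (2 : ℤ) • f (n • x)
        - (2 * n ^ 2) • f x - (2 * (n ^ 2 - 1)) • f y := by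
  refine ⟨fun hD x y => ?_, fun hf u v => ?_⟩
  · have h := hD x y
    simp only [quadDefect] at h
    linear_combination (norm := module) h
  · simp only [quadDefect]
    linear_combination (norm := module) hf u v

namespace IsQuadDefectHomogeneous

variable [IsAddTorsionFree Y] {n : ℤ} {f : X → Y}

theorem quadDefect_zero_left (hD : IsQuadDefectHomogeneous n f) (hn : n ^ 2 ≠ 1) (v : X) :
    quadDefect f 0 v = 0 := by
  have h : (n ^ 2 - 1) • quadDefect f 0 v = 0 := by
    rw [sub_smul, one_smul, ← hD, smul_zero, sub_self]
  exact (IsAddTorsionFree.zsmul_eq_zero_iff_right (sub_ne_zero.mpr hn)).mp h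

theorem map_zero (hD : IsQuadDefectHomogeneous n f) (hn : n ^ 2 ≠ 1) : f 0 = 0 := by
  have h : (-2 : ℤ) • f 0 = 0 := by
    rw [← hD.quadDefect_zero_left hn 0, quadDefect, add_zero, sub_zero]
    module
  exact (IsAddTorsionFree.zsmul_eq_zero_iff_right (by norm_num)).mp h

theorem even (hD : IsQuadDefectHomogeneous n f) (hn : n ^ 2 ≠ 1) : Function.Even f := by
  intro v
  have h := hD.quadDefect_zero_left hn v
  rw [quadDefect, hD.map_zero hn, zero_add, zero_sub] at h
  linear_combination (norm := module) h

theorem quadDefect_zsmul_right (hD : IsQuadDefectHomogeneous n f) (hn : n ^ 2 ≠ 1) (u v : X) :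
    quadDefect f u (n • v) = n ^ 2 • quadDefect f u v := by
  rw [quadDefect_comm (hD.even hn), hD, quadDefect_comm (hD.even hn)]

theorem quadDefect_two_smul_left (hD : IsQuadDefectHomogeneous n f) (hn0 : n ≠ 0)
    (hn : n ^ 2 ≠ 1) (x y : X) :
    quadDefect f ((2 : ℤ) • x) y = (4 : ℤ) • quadDefect f x y := by
  have h0 := hD.quadDefect_zero_left hn
  have hneg := quadDefect_neg_left (hD.even hn)
  have e1 := quadDefect_add_self_left h0 x y
  have e2 := quadDefect_add_sub_swap f (n • x) x y
  rw [hD x x, hD x y] at e2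
  have e3 := quadDefect_add_sub_swap f x (n • x) y
  rw [hD.quadDefect_zsmul_right hn x x, hD.quadDefect_zsmul_right hn (x + y) x,
    hD.quadDefect_zsmul_right hn (x - y) x, add_comm x (n • x), ← neg_sub, hneg] at e3
  have e4 : quadDefect f (x + x) y = quadDefect f (n • x + y) x + quadDefect f (n • x - y) x
      + (2 : ℤ) • quadDefect f x y - (2 * n ^ 2) • quadDefect f x x := by
    have h := quadDefect_add_self_left h0 (n • x) y
    rw [← smul_add, hD (x + x) y, hD.quadDefect_zsmul_right hn (n • x + y) x,
      hD.quadDefect_zsmul_right hn (n • x - y) x, hD x y, hD x (n • x),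
      hD.quadDefect_zsmul_right hn x x] at h
    exact (zsmul_right_inj (pow_ne_zero 2 hn0)).mp (by linear_combination (norm := module) h)
  have key : (1 - n ^ 2) • (quadDefect f (x + x) y - (4 : ℤ) • quadDefect f x y) = 0 := by
    linear_combination (norm := module) (-(n ^ 2)) • e1 - e2 + e3 + e4
  rw [two_zsmul]
  exact sub_eq_zero.mp
    ((IsAddTorsionFree.zsmul_eq_zero_iff_right (sub_ne_zero.mpr (Ne.symm hn))).mp key)

theorem quadDefect_two_smul_two_smul (hD : IsQuadDefectHomogeneous n f) (hn0 : n ≠ 0)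
    (hn : n ^ 2 ≠ 1) (x y : X) :
    quadDefect f ((2 : ℤ) • x) ((2 : ℤ) • y) = (16 : ℤ) • quadDefect f x y := by
  rw [hD.quadDefect_two_smul_left hn0 hn, quadDefect_comm (hD.even hn),
    hD.quadDefect_two_smul_left hn0 hn, quadDefect_comm (hD.even hn), smul_smul]
  norm_num

theorem quadratic_equation_of_eq_two_smul_sub (hD : IsQuadDefectHomogeneous n f) (hn0 : n ≠ 0)
    (hn : n ^ 2 ≠ 1) {g : X → Y} (hg : ∀ x, g x = f ((2 : ℤ) • x) - (16 : ℤ) • f x) (x y : X) :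
    g (x + y) + g (x - y) = (2 : ℤ) • g x + (2 : ℤ) • g y := by
  have h := hD.quadDefect_two_smul_two_smul hn0 hn x y
  simp only [quadDefect, ← smul_add, ← smul_sub] at h
  simp only [hg]
  linear_combination (norm := module) h

theorem quartic_equation_of_eq_two_smul_sub (hD : IsQuadDefectHomogeneous n f) (hn0 : n ≠ 0)
    (hn : n ^ 2 ≠ 1) {h : X → Y} (hh : ∀ x, h x = f ((2 : ℤ) • x) - (4 : ℤ) • f x) (x y : X) :
    h ((2 : ℤ) • x + y) + h ((2 : ℤ) • x - y) =
      (4 : ℤ) • h (x + y) + (4 : ℤ) • h (x - y) + (24 : ℤ) • h x - (6 : ℤ) • h y := by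
  have d1 := hD.quadDefect_two_smul_left hn0 hn x y
  have d2 := hD.quadDefect_two_smul_two_smul hn0 hn x y
  have d3 : quadDefect f ((2 : ℤ) • ((2 : ℤ) • x)) ((2 : ℤ) • y) =
      (64 : ℤ) • quadDefect f x y := by
    rw [hD.quadDefect_two_smul_left hn0 hn, d2, smul_smul]
    norm_num
  have d4 : f ((2 : ℤ) • ((2 : ℤ) • x)) = (20 : ℤ) • f ((2 : ℤ) • x) - (64 : ℤ) • f x := by
    have e := hD.quadDefect_two_smul_two_smul hn0 hn x x
    simp only [quadDefect, sub_self, hD.map_zero hn, ← two_zsmul] at e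
    linear_combination (norm := module) e
  simp only [quadDefect, ← smul_add, ← smul_sub] at d1 d2 d3
  simp only [hh]
  linear_combination (norm := module) d3 - (4 : ℤ) • d1 - (4 : ℤ) • d2 + (2 : ℤ) • d4

end IsQuadDefectHomogeneous

end

theorem stmt_7_general {X Y : Type*} [AddCommGroup X] [AddCommGroup Y] [Module ℝ Y]
    (n : ℤ) (hn0 : n ≠ 0) (hn1 : n ≠ 1) (hn2 : n ≠ -1) (f : X → Y)
    (hf : ∀ x y : X, f (n • x + y) + f (n • x - y) =
      (n ^ 2) • f (x + y) + (n ^ 2) • f (x - y) + (2 : ℤ) • f (n • x)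
        - (2 * n ^ 2) • f x - (2 * (n ^ 2 - 1)) • f y)
    (g h : X → Y)
    (hg : ∀ x : X, g x = f ((2 : ℤ) • x) - (16 : ℤ) • f x)
    (hh : ∀ x : X, h x = f ((2 : ℤ) • x) - (4 : ℤ) • f x) :
    (∀ x : X, f x = ((1 : ℝ) / 12) • h x - ((1 : ℝ) / 12) • g x) ∧
    (∀ x y : X, h ((2 : ℤ) • x + y) + h ((2 : ℤ) • x - y) =
      (4 : ℤ) • h (x + y) + (4 : ℤ) • h (x - y) + (24 : ℤ) • h x - (6 : ℤ) • h y) ∧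
    (∀ x y : X, g (x + y) + g (x - y) = (2 : ℤ) • g x + (2 : ℤ) • g y) := by
  have : IsAddTorsionFree Y := .of_isTorsionFree ℝ Y
  have hn : n ^ 2 ≠ 1 := by simpa [sq_eq_one_iff] using And.intro hn1 hn2
  have hD : IsQuadDefectHomogeneous n f := isQuadDefectHomogeneous_iff.mpr hf
  refine ⟨fun x => ?_, hD.quartic_equation_of_eq_two_smul_sub hn0 hn hh,
    hD.quadratic_equation_of_eq_two_smul_sub hn0 hn hg⟩
  simp only [hh, hg, ← Int.cast_smul_eq_zsmul ℝ]
  module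

theorem stmt_7 {X Y : Type*} [AddCommGroup X] [Module ℝ X] [AddCommGroup Y] [Module ℝ Y]
    (n : ℤ) (hn0 : n ≠ 0) (hn1 : n ≠ 1) (hn2 : n ≠ -1) (f : X → Y)
    (hf : ∀ x y : X, f (n • x + y) + f (n • x - y) =
      (n ^ 2) • f (x + y) + (n ^ 2) • f (x - y) + (2 : ℤ) • f (n • x)
        - (2 * n ^ 2) • f x - (2 * (n ^ 2 - 1)) • f y)
    (g h : X → Y)
    (hg : ∀ x : X, g x = f ((2 : ℤ) • x) - (16 : ℤ) • f x)
    (hh : ∀ x : X, h x = f ((2 : ℤ) • x) - (4 : ℤ) • f x) :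
    (∀ x : X, f x = ((1 : ℝ) / 12) • h x - ((1 : ℝ) / 12) • g x) ∧
    (∀ x y : X, h ((2 : ℤ) • x + y) + h ((2 : ℤ) • x - y) =
      (4 : ℤ) • h (x + y) + (4 : ℤ) • h (x - y) + (24 : ℤ) • h x - (6 : ℤ) • h y) ∧
    (∀ x y : X, g (x + y) + g (x - y) = (2 : ℤ) • g x + (2 : ℤ) • g y) :=
  stmt_7_general n hn0 hn1 hn2 f hf g h hg hh
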